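/- arXiv:2404.17090 — 2 statements merged into one kernel-verified Lean document; each statement's English description precedes it below -/
import Mathlib

section
/- Let $(M,g,X)$ satisfy the $m$-quasi-Einstein equation with $M$ closed and $m \neq 0, -2$, and suppose the scalar curvature $R$ is constant. Assume the integral identity $(1 - \frac{4}{m})\int_M \nabla_X \mathrm{div}\,X\,dV = (\frac{1}{m}+\frac{1}{2})\int_M |\mathcal{L}_X g|^2\,dV + \frac{6}{m}\int_M (\mathrm{div}\,X)^2\,dV$ holds. Then $X$ is Killing, i.e. $\mathcal{L}_X g = 0$. -/
open MeasureTheory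

theorem Continuous.eq_zero_of_integral_eq_zero_of_nonneg {α : Type*} [MeasurableSpace α]
    [TopologicalSpace α] {μ : Measure α} [μ.IsOpenPosMeasure] {f : α → ℝ} (hf : Continuous f)
    (hfi : Integrable f μ) (hf_nonneg : 0 ≤ f) (h : ∫ x, f x ∂μ = 0) (x : α) : f x = 0 := by
  by_contra hx
  exact (integral_pos_of_integrable_nonneg_nonzero hf hfi hf_nonneg hx).ne' h

lemma one_div_add_one_half_ne_zero {m : ℝ} (hm2 : m ≠ -2) : 1 / m + 1 / 2 ≠ 0 := by
  intro h
  have hinv : 1 / m = 1 / (-2) := by linarith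
  rw [one_div, one_div, inv_inj] at hinv
  exact hm2 hinv

/-- The two sides of the hypothesis differ by `(1/m + 1/2) * (b + 2 * a)`. -/
lemma eq_neg_two_mul_of_integral_identity {a b m : ℝ} (hm2 : m ≠ -2)
    (h : (1 - 4 / m) * -a = (1 / m + 1 / 2) * b + (6 / m) * a) : b = -2 * a :=
  mul_left_cancel₀ (one_div_add_one_half_ne_zero hm2) (by linear_combination -h)

theorem stmt_6_general
    {M : Type*} [MeasurableSpace M] [TopologicalSpace M]
    (μ : Measure M) [μ.IsOpenPosMeasure]
    {S : Type*} [AddCommGroup S]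
    (LXg : S) (normLXgsq divX nabXdivX : M → ℝ)
    (m : ℝ) (hm2 : m ≠ -2)
    (hcont1 : Continuous normLXgsq)
    (hnonneg : ∀ x, 0 ≤ normLXgsq x)
    (hnondeg : (∀ x, normLXgsq x = 0) → LXg = 0)
    (hint1 : Integrable normLXgsq μ)
    -- Lemma 2.1: ∫ ∇_X div X = -∫ (div X)^2 on a closed manifold
    (hlemma : ∫ x, nabXdivX x ∂μ = -∫ x, (divX x) ^ 2 ∂μ)
    -- the integrated identity (2.6)
    (hidentity : (1 - 4 / m) * ∫ x, nabXdivX x ∂μ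
        = (1 / m + 1 / 2) * ∫ x, normLXgsq x ∂μ + (6 / m) * ∫ x, (divX x) ^ 2 ∂μ) :
    LXg = 0 := by
  rw [hlemma] at hidentity
  have hLX : ∫ x, normLXgsq x ∂μ = -2 * ∫ x, (divX x) ^ 2 ∂μ :=
    eq_neg_two_mul_of_integral_identity hm2 hidentity
  have hdiv_nonneg : 0 ≤ ∫ x, (divX x) ^ 2 ∂μ := integral_nonneg fun x => sq_nonneg _
  have hLX_zero : ∫ x, normLXgsq x ∂μ = 0 :=
    le_antisymm (by linarith) (integral_nonneg hnonneg)
  exact hnondeg (hcont1.eq_zero_of_integral_eq_zero_of_nonneg hint1 hnonneg hLX_zero)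

/-- Let `(M, g, X)` be a closed m-quasi-Einstein manifold with `m ≠ 0, -2`
and constant scalar curvature, and assume the integral identity
`(1 - 4/m) ∫ ∇_X div X = (1/m + 1/2) ∫ |L_X g|^2 + (6/m) ∫ (div X)^2`.  Together with the
lemma `∫ ∇_X div X = -∫ (div X)^2` (valid on a closed manifold) this forces `L_X g = 0`,
i.e. `X` is Killing.  The norm squared `|L_X g|^2` is a continuous nonnegative function
vanishing identically iff `L_X g = 0`. -/
theorem stmt_6
    {M : Type*} [MeasurableSpace M] [TopologicalSpace M] [BorelSpace M] [CompactSpace M]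
    (μ : Measure M) [IsFiniteMeasure μ] [μ.IsOpenPosMeasure]
    {S : Type*} [AddCommGroup S] [Module ℝ S]
    (LXg : S) (normLXgsq divX nabXdivX : M → ℝ)
    (m : ℝ) (hm : m ≠ 0) (hm2 : m ≠ -2)
    (hcont1 : Continuous normLXgsq) (hcont2 : Continuous divX)
    (hnonneg : ∀ x, 0 ≤ normLXgsq x)
    (hnondeg : (∀ x, normLXgsq x = 0) → LXg = 0)
    (hint1 : Integrable normLXgsq μ)
    (hint2 : Integrable (fun x => (divX x) ^ 2) μ)
    (hint3 : Integrable nabXdivX μ)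
    -- Lemma 2.1: ∫ ∇_X div X = -∫ (div X)^2 on a closed manifold
    (hlemma : ∫ x, nabXdivX x ∂μ = -∫ x, (divX x) ^ 2 ∂μ)
    -- the integrated identity (2.6)
    (hidentity : (1 - 4 / m) * ∫ x, nabXdivX x ∂μ
        = (1 / m + 1 / 2) * ∫ x, normLXgsq x ∂μ + (6 / m) * ∫ x, (divX x) ^ 2 ∂μ) :
    LXg = 0 :=
  stmt_6_general μ LXg normLXgsq divX nabXdivX m hm2 hcont1 hnonneg hnondeg hint1 hlemma hidentity
end

section
/- Let $(M,g,X)$ satisfy the $m$-quasi-Einstein equation, let $\Gamma > 0$ be smooth, and set $K = \frac{2}{m}\Gamma X + \nabla\Gamma$. Then $\mathcal{L}_K g = \frac{1}{\Gamma}K^*\otimes K^* - \frac{1}{\Gamma}d\Gamma\otimes d\Gamma - \frac{4\Gamma}{m}\mathrm{Ric} + 2\,\mathrm{Hess}\,\Gamma + \frac{4\Gamma\lambda}{m}g$. -/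
/-!
Write `K = f • X + ∇Γ` with `f = (2/m) Γ`. The Leibniz rule gives
`L_K g = f L_X g + df ⊗ X* + X* ⊗ df + 2 Hess Γ`, and the quasi-Einstein equation replaces
`L_X g` by `2λ g - 2 Ric + (2/m) X* ⊗ X*`. Expanding `(1/Γ) K* ⊗ K*` produces the same mixed
terms `(2/m)(dΓ ⊗ X* + X* ⊗ dΓ)` as `df ⊗ X* + X* ⊗ df`, so they cancel, and what remains is
`(1/Γ) dΓ ⊗ dΓ` and `(4Γ/m²) X* ⊗ X*`.
-/

section LieDerivative

variable {M V : Type*} {gmet : V → V → M → ℝ} {Lie : V → V → V → M → ℝ} {cov : V → V → V}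

theorem lie_eq_two_hess {Hess : V → V → M → ℝ} {grad : V}
    (hLie : ∀ W Y Z, Lie W Y Z = fun x => gmet (cov Y W) Z x + gmet (cov Z W) Y x)
    (hHess : ∀ Y Z, Hess Y Z = gmet (cov Y grad) Z)
    (hHsymm : ∀ Y Z, Hess Y Z = Hess Z Y) (Y Z : V) :
    Lie grad Y Z = fun x => 2 * Hess Y Z x := by
  funext x
  rw [hLie, ← hHess, ← hHess, hHsymm Z Y]
  ring

variable [AddCommGroup V] [Module (M → ℝ) V] {D : (M → ℝ) → V → M → ℝ}

theorem lie_smul_add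
    (hLie : ∀ W Y Z, Lie W Y Z = fun x => gmet (cov Y W) Z x + gmet (cov Z W) Y x)
    (hLeibniz : ∀ (f : M → ℝ) (W Y : V), cov Y (f • W) = f • cov Y W + (D f Y) • W)
    (hgmetF : ∀ (f : M → ℝ) (W Y : V), gmet (f • W) Y = fun x => f x * gmet W Y x)
    (hgmetadd : ∀ W W' Y : V, gmet (W + W') Y = fun x => gmet W Y x + gmet W' Y x)
    (hcovadd : ∀ Y W W' : V, cov Y (W + W') = cov Y W + cov Y W')
    (f : M → ℝ) (W W' Y Z : V) :
    Lie (f • W + W') Y Z = fun x => f x * Lie W Y Z x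
      + (D f Y x * gmet W Z x + D f Z x * gmet W Y x) + Lie W' Y Z x := by
  funext x
  simp only [hLie, hcovadd, hLeibniz, hgmetadd, hgmetF]
  ring

end LieDerivative

theorem lie_eq_of_quasiEinstein {ric lie gXY gXZ gYZ m lam : ℝ}
    (hQE : ric + (1 / 2) * lie - (1 / m) * (gXY * gXZ) = lam * gYZ) :
    lie = 2 * lam * gYZ - 2 * ric + (2 / m) * (gXY * gXZ) := by
  linear_combination 2 * hQE

theorem stmt_12_general
    {M : Type*} {V : Type*} [AddCommGroup V] [Module (M → ℝ) V]
    (gmet : V → V → M → ℝ) (Lie : V → V → V → M → ℝ) (Ric : V → V → M → ℝ)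
    (cov : V → V → V) (D : (M → ℝ) → V → M → ℝ)
    (X K gradΓ : V) (Γ : M → ℝ) (hΓ : ∀ x, 0 < Γ x)
    (Hess : V → V → M → ℝ)
    (m lam : ℝ)
    -- the m-quasi-Einstein equation, evaluated on vector fields
    (hQE : ∀ Y Z x, Ric Y Z x + (1 / 2) * Lie X Y Z x
        - (1 / m) * (gmet X Y x * gmet X Z x) = lam * gmet Y Z x)
    -- structural identities of the geometry
    (hLie : ∀ W Y Z, Lie W Y Z = fun x => gmet (cov Y W) Z x + gmet (cov Z W) Y x)
    (hLeibniz : ∀ (f : M → ℝ) (W Y : V), cov Y (f • W) = f • cov Y W + (D f Y) • W)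
    (hD : ∀ Y, D Γ Y = gmet gradΓ Y)
    (hDsmul : ∀ (c : ℝ) (f : M → ℝ) (Y : V), D (fun x => c * f x) Y = fun x => c * D f Y x)
    (hHess : ∀ Y Z, Hess Y Z = gmet (cov Y gradΓ) Z)
    (hHsymm : ∀ Y Z, Hess Y Z = Hess Z Y)
    (hgmetF : ∀ (f : M → ℝ) (W Y : V), gmet (f • W) Y = fun x => f x * gmet W Y x)
    (hgmetadd : ∀ W W' Y : V, gmet (W + W') Y = fun x => gmet W Y x + gmet W' Y x)
    (hcovadd : ∀ Y W W' : V, cov Y (W + W') = cov Y W + cov Y W')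
    -- definition of K
    (hK : K = ((fun x => (2 / m) * Γ x) : M → ℝ) • X + gradΓ) :
    ∀ Y Z, Lie K Y Z = fun x =>
      (1 / Γ x) * (gmet K Y x * gmet K Z x)
      - (1 / Γ x) * (gmet gradΓ Y x * gmet gradΓ Z x)
      - (4 * Γ x / m) * Ric Y Z x
      + 2 * Hess Y Z x
      + (4 * Γ x * lam / m) * gmet Y Z x := by
  intro Y Z
  funext x
  have hΓx : Γ x ≠ 0 := (hΓ x).ne'
  subst hK
  rw [lie_smul_add hLie hLeibniz hgmetF hgmetadd hcovadd, hDsmul, hDsmul, hD, hD,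
    lie_eq_two_hess hLie hHess hHsymm]
  simp only [hgmetadd, hgmetF]
  rw [lie_eq_of_quasiEinstein (hQE Y Z x)]
  field_simp
  ring

/-- Let `(M, g, X)` satisfy the m-quasi-Einstein equation, `Γ > 0` smooth,
and `K = (2/m) Γ X + ∇Γ`.  Then
`L_K g = (1/Γ) K^* ⊗ K^* - (1/Γ) dΓ ⊗ dΓ - (4Γ/m) Ric + 2 Hess Γ + (4Γλ/m) g`.
The geometry is encoded abstractly as in the symmetrized-covariant-derivative framework. -/
theorem stmt_12
    {M : Type*} {V : Type*} [AddCommGroup V] [Module (M → ℝ) V]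
    (gmet : V → V → M → ℝ) (Lie : V → V → V → M → ℝ) (Ric : V → V → M → ℝ)
    (cov : V → V → V) (D : (M → ℝ) → V → M → ℝ)
    (X K gradΓ : V) (Γ : M → ℝ) (hΓ : ∀ x, 0 < Γ x)
    (Hess : V → V → M → ℝ)
    (m lam : ℝ) (hm : m ≠ 0)
    -- the m-quasi-Einstein equation, evaluated on vector fields
    (hQE : ∀ Y Z x, Ric Y Z x + (1 / 2) * Lie X Y Z x
        - (1 / m) * (gmet X Y x * gmet X Z x) = lam * gmet Y Z x)
    -- structural identities of the geometry
    (hLie : ∀ W Y Z, Lie W Y Z = fun x => gmet (cov Y W) Z x + gmet (cov Z W) Y x)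
    (hLeibniz : ∀ (f : M → ℝ) (W Y : V), cov Y (f • W) = f • cov Y W + (D f Y) • W)
    (hD : ∀ Y, D Γ Y = gmet gradΓ Y)
    (hDsmul : ∀ (c : ℝ) (f : M → ℝ) (Y : V), D (fun x => c * f x) Y = fun x => c * D f Y x)
    (hHess : ∀ Y Z, Hess Y Z = gmet (cov Y gradΓ) Z)
    (hHsymm : ∀ Y Z, Hess Y Z = Hess Z Y)
    (hgmetF : ∀ (f : M → ℝ) (W Y : V), gmet (f • W) Y = fun x => f x * gmet W Y x)
    (hgmetadd : ∀ W W' Y : V, gmet (W + W') Y = fun x => gmet W Y x + gmet W' Y x)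
    (hgmetsymm : ∀ W Y : V, gmet W Y = gmet Y W)
    (hcovadd : ∀ Y W W' : V, cov Y (W + W') = cov Y W + cov Y W')
    -- definition of K
    (hK : K = ((fun x => (2 / m) * Γ x) : M → ℝ) • X + gradΓ) :
    ∀ Y Z, Lie K Y Z = fun x =>
      (1 / Γ x) * (gmet K Y x * gmet K Z x)
      - (1 / Γ x) * (gmet gradΓ Y x * gmet gradΓ Z x)
      - (4 * Γ x / m) * Ric Y Z x
      + 2 * Hess Y Z x
      + (4 * Γ x * lam / m) * gmet Y Z x :=
  stmt_12_general gmet Lie Ric cov D X K gradΓ Γ hΓ Hess m lam hQE hLie hLeibniz hD hDsmul hHess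
    hHsymm hgmetF hgmetadd hcovadd hK
end
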